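/- (Proposition 3(ii).) Let γ₁, γ₂, γ₃, γ₄ ∈ ℂ and let n be a positive integer. With u_I = u_II := −n/2: (I) for E_I := −(iγ₁n + γ₂n² − iγ₃n³ − γ₄n⁴), one has, for all B ∈ ℂ, Φ(B, E_I, u_I) = −B(B − n − 1)·(iγ₁ + 2γ₂(B − 1) + iγ₃(n(2B − n − 2) − 4(B − 1)²) + 4γ₄(B − 1)(n(2B − n − 2) − 2(B − 1)²))·(iγ₁ − 2γ₂(B − n) + iγ₃(3n(2B − n) − 4B²) − 4γ₄(B − n)(n(2B − n) − 2B²)); in particular Φ(0, E_I, u_I) = 0 = Φ(n+1, E_I, u_I). (II) For E_II := iγ₁(n + 2) − γ₂(n + 2)² − iγ₃(n + 2)³ + γ₄(n + 2)⁴, one has, for all B ∈ ℂ, Φ(B, E_II, u_II) = −B(B − n − 1)·(iγ₁ − 2γ₂(B + 1) + iγ₃(n(2B − n − 2) − 4(B² + B + 1)) − 4γ₄(B + 1)(n(2B − n − 2) − 2(B² + 1)))·(iγ₁ + 2γ₂(B − n − 2) + iγ₃(3(n + 2)(2B − n − 2) − 4B²) + 4γ₄(B − n − 2)((n + 2)(2B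 − n − 2) − 2B²)); in particular Φ(0, E_II, u_II) = 0 = Φ(n+1, E_II, u_II). -/
import Mathlib


noncomputable section
open Complex

/-- `Φ₁(B,E,u) = (1/4)(E − 2iγ₁(B+u) + 4γ₂(B+u)² + 8iγ₃(B+u)³ − 16γ₄(B+u)⁴)`. -/
def Phi1 (γ₁ γ₂ γ₃ γ₄ B E u : ℂ) : ℂ :=
  (1/4) * (E - 2*I*γ₁*(B + u) + 4*γ₂*(B + u)^2 + 8*I*γ₃*(B + u)^3 - 16*γ₄*(B + u)^4)

/-- `Φ₂(B,E,u) = E + 2iγ₁(B+u−1) + 4γ₂(B+u−1)² − 8iγ₃(B+u−1)³ − 16γ₄(B+u−1)⁴`. -/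
def Phi2 (γ₁ γ₂ γ₃ γ₄ B E u : ℂ) : ℂ :=
  E + 2*I*γ₁*(B + u - 1) + 4*γ₂*(B + u - 1)^2 - 8*I*γ₃*(B + u - 1)^3
    - 16*γ₄*(B + u - 1)^4

/-- `Φ = Φ₁·Φ₂`, the structure function of the quartic quantum Zernike system. -/
def Phi (γ₁ γ₂ γ₃ γ₄ B E u : ℂ) : ℂ :=
  Phi1 γ₁ γ₂ γ₃ γ₄ B E u * Phi2 γ₁ γ₂ γ₃ γ₄ B E u

/-- Proposition 3(ii): Types I and II of the quartic system. -/
theorem prop3_types_I_II (γ₁ γ₂ γ₃ γ₄ : ℂ) (n : ℕ) (hn : 1 ≤ n) :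
    (∀ B : ℂ, Phi γ₁ γ₂ γ₃ γ₄ B
          (-(I*γ₁*(n : ℂ) + γ₂*(n : ℂ)^2 - I*γ₃*(n : ℂ)^3 - γ₄*(n : ℂ)^4)) (-(n : ℂ)/2)
        = -B * (B - (n : ℂ) - 1)
          * (I*γ₁ + 2*γ₂*(B - 1) + I*γ₃*((n : ℂ)*(2*B - (n : ℂ) - 2) - 4*(B - 1)^2)
              + 4*γ₄*(B - 1)*((n : ℂ)*(2*B - (n : ℂ) - 2) - 2*(B - 1)^2))
          * (I*γ₁ - 2*γ₂*(B - (n : ℂ)) + I*γ₃*(3*(n : ℂ)*(2*B - (n : ℂ)) - 4*B^2)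
              - 4*γ₄*(B - (n : ℂ))*((n : ℂ)*(2*B - (n : ℂ)) - 2*B^2))) ∧
    Phi γ₁ γ₂ γ₃ γ₄ 0
        (-(I*γ₁*(n : ℂ) + γ₂*(n : ℂ)^2 - I*γ₃*(n : ℂ)^3 - γ₄*(n : ℂ)^4)) (-(n : ℂ)/2) = 0 ∧
    Phi γ₁ γ₂ γ₃ γ₄ ((n : ℂ) + 1)
        (-(I*γ₁*(n : ℂ) + γ₂*(n : ℂ)^2 - I*γ₃*(n : ℂ)^3 - γ₄*(n : ℂ)^4)) (-(n : ℂ)/2) = 0 ∧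
    (∀ B : ℂ, Phi γ₁ γ₂ γ₃ γ₄ B
          (I*γ₁*((n : ℂ) + 2) - γ₂*((n : ℂ) + 2)^2 - I*γ₃*((n : ℂ) + 2)^3
            + γ₄*((n : ℂ) + 2)^4) (-(n : ℂ)/2)
        = -B * (B - (n : ℂ) - 1)
          * (I*γ₁ - 2*γ₂*(B + 1) + I*γ₃*((n : ℂ)*(2*B - (n : ℂ) - 2) - 4*(B^2 + B + 1))
              - 4*γ₄*(B + 1)*((n : ℂ)*(2*B - (n : ℂ) - 2) - 2*(B^2 + 1)))
          * (I*γ₁ + 2*γ₂*(B - (n : ℂ) - 2)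
              + I*γ₃*(3*((n : ℂ) + 2)*(2*B - (n : ℂ) - 2) - 4*B^2)
              + 4*γ₄*(B - (n : ℂ) - 2)*(((n : ℂ) + 2)*(2*B - (n : ℂ) - 2) - 2*B^2))) ∧
    Phi γ₁ γ₂ γ₃ γ₄ 0
        (I*γ₁*((n : ℂ) + 2) - γ₂*((n : ℂ) + 2)^2 - I*γ₃*((n : ℂ) + 2)^3
          + γ₄*((n : ℂ) + 2)^4) (-(n : ℂ)/2) = 0 ∧
    Phi γ₁ γ₂ γ₃ γ₄ ((n : ℂ) + 1)
        (I*γ₁*((n : ℂ) + 2) - γ₂*((n : ℂ) + 2)^2 - I*γ₃*((n : ℂ) + 2)^3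
          + γ₄*((n : ℂ) + 2)^4) (-(n : ℂ)/2) = 0 := by
  have h1 : ∀ B : ℂ, Phi γ₁ γ₂ γ₃ γ₄ B
          (-(I*γ₁*(n : ℂ) + γ₂*(n : ℂ)^2 - I*γ₃*(n : ℂ)^3 - γ₄*(n : ℂ)^4)) (-(n : ℂ)/2)
        = -B * (B - (n : ℂ) - 1)
          * (I*γ₁ + 2*γ₂*(B - 1) + I*γ₃*((n : ℂ)*(2*B - (n : ℂ) - 2) - 4*(B - 1)^2)
              + 4*γ₄*(B - 1)*((n : ℂ)*(2*B - (n : ℂ) - 2) - 2*(B - 1)^2))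
          * (I*γ₁ - 2*γ₂*(B - (n : ℂ)) + I*γ₃*(3*(n : ℂ)*(2*B - (n : ℂ)) - 4*B^2)
              - 4*γ₄*(B - (n : ℂ))*((n : ℂ)*(2*B - (n : ℂ)) - 2*B^2)) := by
    intro B
    simp only [Phi, Phi1, Phi2]
    ring
  have h2 : ∀ B : ℂ, Phi γ₁ γ₂ γ₃ γ₄ B
          (I*γ₁*((n : ℂ) + 2) - γ₂*((n : ℂ) + 2)^2 - I*γ₃*((n : ℂ) + 2)^3
            + γ₄*((n : ℂ) + 2)^4) (-(n : ℂ)/2)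
        = -B * (B - (n : ℂ) - 1)
          * (I*γ₁ - 2*γ₂*(B + 1) + I*γ₃*((n : ℂ)*(2*B - (n : ℂ) - 2) - 4*(B^2 + B + 1))
              - 4*γ₄*(B + 1)*((n : ℂ)*(2*B - (n : ℂ) - 2) - 2*(B^2 + 1)))
          * (I*γ₁ + 2*γ₂*(B - (n : ℂ) - 2)
              + I*γ₃*(3*((n : ℂ) + 2)*(2*B - (n : ℂ) - 2) - 4*B^2)
              + 4*γ₄*(B - (n : ℂ) - 2)*(((n : ℂ) + 2)*(2*B - (n : ℂ) - 2) - 2*B^2)) := by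
    intro B
    simp only [Phi, Phi1, Phi2]
    ring
  refine ⟨h1, ?_, ?_, h2, ?_, ?_⟩
  · rw [h1 0]; ring
  · rw [h1 ((n : ℂ) + 1)]; ring
  · rw [h2 0]; ring
  · rw [h2 ((n : ℂ) + 1)]; ring
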